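/- As t → ∞ (equivalently G(t) → 1), the survival function of the BKw-G family satisfies 1 - I_{1-(1-G(t)^a)^b}(m,n) ~ (1-G(t)^a)^{bn}/(n·B(m,n)), i.e., the ratio of the two sides tends to 1. -/

import Mathlib

open Real Filter

noncomputable def betaFn (m n : ℝ) : ℝ :=
  ∫ x in (0:ℝ)..1, x ^ (m - 1) * (1 - x) ^ (n - 1)

noncomputable def regIncBeta (x m n : ℝ) : ℝ :=
  (1 / betaFn m n) * ∫ v in (0:ℝ)..x, v ^ (m - 1) * (1 - v) ^ (n - 1)

/-!
Put `u = (1 - G(t)^a)^b`, so that `u → 0⁺` and `(1 - G(t)^a)^(bn) = u^n`. The survival function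
is the beta tail `∫_{1-u}^1 v^(m-1) (1-v)^(n-1) dv / B(m,n)`, and on `[1-u, 1]` the factor
`v^(m-1)` lies between `(1-u)^(m-1)` and `1`, both tending to `1`; since
`∫_{1-u}^1 (1-v)^(n-1) dv = u^n / n`, the tail is `u^n / n · (1 + o(1))`.
-/

open Set Topology

theorem rpow_mem_uIcc_rpow_one {x v : ℝ} (hx : 0 < x) (hv : v ∈ Icc x 1) (p : ℝ) :
    v ^ p ∈ uIcc (x ^ p) 1 := by
  rw [mem_uIcc]
  rcases le_total 0 p with hp | hp
  · exact Or.inl ⟨rpow_le_rpow hx.le hv.1 hp, one_rpow p ▸ rpow_le_rpow (hx.le.trans hv.1) hv.2 hp⟩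
  · exact Or.inr ⟨one_rpow p ▸ rpow_le_rpow_of_nonpos (hx.trans_le hv.1) hv.2 hp,
      rpow_le_rpow_of_nonpos hx hv.1 hp⟩

section BetaIntegral

variable {m n : ℝ}

theorem integral_one_sub_rpow (hn : 0 < n) (u : ℝ) :
    ∫ v in (1 - u)..1, (1 - v) ^ (n - 1) = u ^ n / n := by
  rw [intervalIntegral.integral_comp_sub_left (fun w : ℝ => w ^ (n - 1)), sub_self,
    sub_sub_cancel, integral_rpow (Or.inl (by linarith)), sub_add_cancel, zero_rpow hn.ne',
    sub_zero]

theorem intervalIntegrable_one_sub_rpow (hn : 0 < n) (u : ℝ) :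
    IntervalIntegrable (fun v : ℝ => (1 - v) ^ (n - 1)) MeasureTheory.volume (1 - u) 1 := by
  have h := (intervalIntegral.intervalIntegrable_rpow' (a := 0) (b := u) (r := n - 1)
    (by linarith)).comp_sub_left 1
  rw [sub_zero] at h
  exact h.symm

theorem intervalIntegrable_betaIntegrand (hm : 0 < m) (hn : 0 < n) :
    IntervalIntegrable (fun v : ℝ => v ^ (m - 1) * (1 - v) ^ (n - 1)) MeasureTheory.volume 0 1 := by
  have hleft : IntervalIntegrable (fun v : ℝ => v ^ (m - 1) * (1 - v) ^ (n - 1))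
      MeasureTheory.volume 0 (1 / 2) := by
    refine (intervalIntegral.intervalIntegrable_rpow' (by linarith)).mul_continuousOn ?_
    refine ContinuousOn.rpow_const (by fun_prop) fun v hv => Or.inl ?_
    rw [uIcc_of_le (by norm_num)] at hv
    linarith [hv.2]
  have hright : IntervalIntegrable (fun v : ℝ => v ^ (m - 1) * (1 - v) ^ (n - 1))
      MeasureTheory.volume (1 / 2) 1 := by
    refine IntervalIntegrable.continuousOn_mul ?_ ?_
    · convert intervalIntegrable_one_sub_rpow hn (1 / 2) using 1
      norm_num
    · refine ContinuousOn.rpow_const (by fun_prop) fun v hv => Or.inl ?_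
      rw [uIcc_of_le (by norm_num)] at hv
      linarith [hv.1]
  exact hleft.trans hright

theorem betaFn_pos (hm : 0 < m) (hn : 0 < n) : 0 < betaFn m n :=
  intervalIntegral.intervalIntegral_pos_of_pos_on (intervalIntegrable_betaIntegrand hm hn)
    (fun _ hv => mul_pos (rpow_pos_of_pos hv.1 _) (rpow_pos_of_pos (by linarith [hv.2]) _))
    zero_lt_one

theorem one_sub_regIncBeta (hm : 0 < m) (hn : 0 < n) {x : ℝ} (hx : x ∈ Icc (0 : ℝ) 1) :
    1 - regIncBeta x m n =
      (∫ v in x..1, v ^ (m - 1) * (1 - v) ^ (n - 1)) / betaFn m n := by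
  have hx' : x ∈ uIcc (0 : ℝ) 1 := by rwa [uIcc_of_le zero_le_one]
  have hsplit : (∫ v in (0 : ℝ)..x, v ^ (m - 1) * (1 - v) ^ (n - 1)) +
      (∫ v in x..1, v ^ (m - 1) * (1 - v) ^ (n - 1)) = betaFn m n :=
    intervalIntegral.integral_add_adjacent_intervals
      ((intervalIntegrable_betaIntegrand hm hn).mono_set (uIcc_subset_uIcc_left hx'))
      ((intervalIntegrable_betaIntegrand hm hn).mono_set (uIcc_subset_uIcc_right hx'))
  have hB := (betaFn_pos hm hn).ne'
  rw [regIncBeta]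
  field_simp
  linarith

theorem betaTail_div_rpow_mem_uIcc (hm : 0 < m) (hn : 0 < n) {u : ℝ} (hu : u ∈ Ioo (0 : ℝ) 1) :
    n * (∫ v in (1 - u)..1, v ^ (m - 1) * (1 - v) ^ (n - 1)) / u ^ n ∈
      uIcc ((1 - u) ^ (m - 1)) 1 := by
  obtain ⟨hu0, hu1⟩ := hu
  set c := (1 - u) ^ (m - 1)
  have hsub : 1 - u ≤ 1 := by linarith
  have hmass (k : ℝ) : ∫ v in (1 - u)..1, k * (1 - v) ^ (n - 1) = k * (u ^ n / n) := by
    rw [intervalIntegral.integral_const_mul, integral_one_sub_rpow hn]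
  have hweight := intervalIntegrable_one_sub_rpow hn u
  have hint : IntervalIntegrable (fun v : ℝ => v ^ (m - 1) * (1 - v) ^ (n - 1))
      MeasureTheory.volume (1 - u) 1 :=
    (intervalIntegrable_betaIntegrand hm hn).mono_set <| by
      rw [uIcc_of_le hsub, uIcc_of_le zero_le_one]
      exact Icc_subset_Icc (by linarith) le_rfl
  have hbound (v : ℝ) (hv : v ∈ Icc (1 - u) 1) :
      v ^ (m - 1) ∈ uIcc c 1 ∧ 0 ≤ (1 - v) ^ (n - 1) :=
    ⟨rpow_mem_uIcc_rpow_one (by linarith) hv _, rpow_nonneg (by linarith [hv.2]) _⟩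
  have hlow : min c 1 * (u ^ n / n) ≤ ∫ v in (1 - u)..1, v ^ (m - 1) * (1 - v) ^ (n - 1) :=
    hmass _ ▸ intervalIntegral.integral_mono_on hsub (hweight.const_mul _) hint fun v hv =>
      mul_le_mul_of_nonneg_right (hbound v hv).1.1 (hbound v hv).2
  have hup : ∫ v in (1 - u)..1, v ^ (m - 1) * (1 - v) ^ (n - 1) ≤ max c 1 * (u ^ n / n) :=
    hmass _ ▸ intervalIntegral.integral_mono_on hsub hint (hweight.const_mul _) fun v hv =>
      mul_le_mul_of_nonneg_right (hbound v hv).1.2 (hbound v hv).2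
  have hmass_pos : 0 < u ^ n / n := div_pos (rpow_pos_of_pos hu0 n) hn
  rw [mul_comm n, ← div_div_eq_mul_div]
  exact ⟨(le_div_iff₀ hmass_pos).2 hlow, (div_le_iff₀ hmass_pos).2 hup⟩

theorem tendsto_betaTail_div_rpow (hm : 0 < m) (hn : 0 < n) :
    Tendsto (fun u => n * (∫ v in (1 - u)..1, v ^ (m - 1) * (1 - v) ^ (n - 1)) / u ^ n)
      (𝓝[>] 0) (𝓝 1) := by
  have hc : Tendsto (fun u : ℝ => (1 - u) ^ (m - 1)) (𝓝[>] 0) (𝓝 1) := by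
    have h : ContinuousAt (fun u : ℝ => (1 - u) ^ (m - 1)) 0 :=
      (continuousAt_const.sub continuousAt_id).rpow_const (Or.inl (by norm_num))
    simpa using h.tendsto.mono_left nhdsWithin_le_nhds
  have hlow : Tendsto (fun u : ℝ => min ((1 - u) ^ (m - 1)) 1) (𝓝[>] 0) (𝓝 1) := by
    simpa using hc.min (tendsto_const_nhds (x := (1 : ℝ)))
  have hup : Tendsto (fun u : ℝ => max ((1 - u) ^ (m - 1)) 1) (𝓝[>] 0) (𝓝 1) := by
    simpa using hc.max (tendsto_const_nhds (x := (1 : ℝ)))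
  have hmem := eventually_of_mem (Ioo_mem_nhdsGT zero_lt_one) fun u hu =>
    betaTail_div_rpow_mem_uIcc hm hn hu
  exact tendsto_of_tendsto_of_tendsto_of_le_of_le' hlow hup (hmem.mono fun _ h => h.1)
    (hmem.mono fun _ h => h.2)

end BetaIntegral

theorem bkw_survival_asymptote_atTop_general
    (G : ℝ → ℝ) (a b m n : ℝ)
    (ha : 0 < a) (hb : 0 < b) (hm : 0 < m) (hn : 0 < n)
    (hGrange : ∀ t, G t ∈ Set.Icc (0:ℝ) 1)
    (hGlt : ∀ t, G t < 1) (hG1 : Tendsto G atTop (nhds 1)) :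
    Tendsto
      (fun t => (1 - regIncBeta (1 - (1 - G t ^ a) ^ b) m n) /
        ((1 - G t ^ a) ^ (b * n) / (n * betaFn m n)))
      atTop (nhds 1) := by
  have hs_pos (t : ℝ) : 0 < 1 - G t ^ a := sub_pos.2 (rpow_lt_one (hGrange t).1 (hGlt t) ha)
  have hs_le (t : ℝ) : 1 - G t ^ a ≤ 1 := sub_le_self _ (rpow_nonneg (hGrange t).1 a)
  have hu : Tendsto (fun t => (1 - G t ^ a) ^ b) atTop (𝓝[>] 0) := by
    refine tendsto_nhdsWithin_iff.2 ⟨?_, .of_forall fun t => rpow_pos_of_pos (hs_pos t) b⟩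
    have hs : Tendsto (fun t => 1 - G t ^ a) atTop (𝓝 0) := by
      simpa using (hG1.rpow_const (Or.inl one_ne_zero)).const_sub 1
    simpa [zero_rpow hb.ne'] using hs.rpow_const (Or.inr hb.le)
  refine ((tendsto_betaTail_div_rpow hm hn).comp hu).congr fun t => ?_
  have hx : 1 - (1 - G t ^ a) ^ b ∈ Icc (0 : ℝ) 1 :=
    ⟨sub_nonneg.2 (rpow_le_one (hs_pos t).le (hs_le t) hb.le),
      sub_le_self _ (rpow_nonneg (hs_pos t).le b)⟩
  rw [Function.comp_apply, one_sub_regIncBeta hm hn hx, rpow_mul (hs_pos t).le]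
  field_simp [(betaFn_pos hm hn).ne']

theorem bkw_survival_asymptote_atTop
    (G : ℝ → ℝ) (a b m n : ℝ)
    (ha : 0 < a) (hb : 0 < b) (hm : 0 < m) (hn : 0 < n)
    (hGcont : Continuous G) (hGrange : ∀ t, G t ∈ Set.Icc (0:ℝ) 1)
    (hGlt : ∀ t, G t < 1) (hG1 : Tendsto G atTop (nhds 1)) :
    Tendsto
      (fun t => (1 - regIncBeta (1 - (1 - G t ^ a) ^ b) m n) /
        ((1 - G t ^ a) ^ (b * n) / (n * betaFn m n)))
      atTop (nhds 1) :=
  bkw_survival_asymptote_atTop_general G a b m n ha hb hm hn hGrange hGlt hG1
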